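/- Let F_wfs = lfp(A) where A(F) = (GL(GL(Fᶜ)))ᶜ, and T_wfs = GL(F_wfsᶜ). Then for every F ⊆ F_wfs, B(F) ⊆ F_wfs, where B(F) = (LM(P_{F,T}^h))ᶜ with T = GL(Fᶜ). Consequently lfp(B) = F_wfs. -/
import Mathlib


/-- A rule of a normal logic program: a head atom, a set of positive body atoms,
    and a set of negated body atoms. -/
structure NRule (α : Type*) where
  head : α
  pos : Set α
  neg : Set α

/-- Models of a Horn program (rules given as (head, body) pairs). -/
def IsModel {α : Type*} (R : Set (α × Set α)) (S : Set α) : Prop :=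
  ∀ r ∈ R, r.2 ⊆ S → r.1 ∈ S

/-- The least model of a Horn program. -/
def LM {α : Type*} (R : Set (α × Set α)) : Set α :=
  ⋂₀ {S | IsModel R S}

/-- The Gelfond–Lifschitz reduct P_M^h: keep rules whose body contains no not(a)
    with a ∈ M, and delete all negative literals. -/
def reduct {α : Type*} (P : Set (NRule α)) (M : Set α) : Set (α × Set α) :=
  {q | ∃ r ∈ P, r.neg ∩ M = ∅ ∧ q = (r.head, r.pos)}

/-- The Gelfond–Lifschitz operator GL(M) = LM(P_M^h). -/
def GLop {α : Type*} (P : Set (NRule α)) (M : Set α) : Set α :=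
  LM (reduct P M)

/-- P_{F,T}: delete rules whose head is in F, whose body has a positive atom in F,
    or whose body contains not(a) with a ∈ T. -/
def del {α : Type*} (P : Set (NRule α)) (F T : Set α) : Set (NRule α) :=
  {r ∈ P | r.head ∉ F ∧ r.pos ∩ F = ∅ ∧ r.neg ∩ T = ∅}

/-- The Horn program R^h obtained by deleting all negative literals. -/
def horn {α : Type*} (R : Set (NRule α)) : Set (α × Set α) :=
  {q | ∃ r ∈ R, q = (r.head, r.pos)}

/-- The operator B(F) = (LM(P_{F,T}^h))ᶜ, where T = GL(Fᶜ). -/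
def Bop {α : Type*} (P : Set (NRule α)) (F : Set α) : Set α :=
  (LM (horn (del P F (GLop P Fᶜ))))ᶜ

-- aux lemmas
lemma lm_le_of_model {α : Type*} {R : Set (α × Set α)} {S : Set α}
    (h : IsModel R S) : LM R ⊆ S :=
  Set.sInter_subset_of_mem h

lemma lm_isModel {α : Type*} (R : Set (α × Set α)) : IsModel R (LM R) := by
  intro r hr hb
  refine Set.mem_sInter.mpr fun S hS => hS r hr (hb.trans (Set.sInter_subset_of_mem hS))

lemma lm_mono {α : Type*} {R R' : Set (α × Set α)} (h : R ⊆ R') : LM R ⊆ LM R' := by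
  intro x hx
  refine Set.mem_sInter.mpr fun S hS => Set.mem_sInter.mp hx S ?_
  exact fun r hr => hS r (h hr)

lemma gl_anti {α : Type*} (P : Set (NRule α)) {M M' : Set α} (h : M ⊆ M') :
    GLop P M' ⊆ GLop P M := by
  apply lm_mono
  rintro q ⟨r, hr, hneg, rfl⟩
  refine ⟨r, hr, ?_, rfl⟩
  rw [Set.eq_empty_iff_forall_notMem] at hneg ⊢
  exact fun a ⟨ha1, ha2⟩ => hneg a ⟨ha1, h ha2⟩

lemma horn_del_subset_reduct {α : Type*} (P : Set (NRule α)) (F T : Set α) :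
    horn (del P F T) ⊆ reduct P T := by
  rintro q ⟨r, ⟨hr, _, _, hneg⟩, rfl⟩
  exact ⟨r, hr, hneg, rfl⟩

/-- core: LM of horn(del P Fwfs Twfs) equals Fwfsᶜ -/
lemma core {α : Type*} (P : Set (NRule α)) (Fwfs : Set α)
    (hfix : GLop P (GLop P Fwfsᶜ) = Fwfsᶜ) :
    LM (horn (del P Fwfs (GLop P Fwfsᶜ))) = Fwfsᶜ := by
  set Twfs := GLop P Fwfsᶜ with hT
  have hsub : LM (horn (del P Fwfs Twfs)) ⊆ Fwfsᶜ := by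
    have := lm_mono (horn_del_subset_reduct P Fwfs Twfs)
    rwa [show LM (reduct P Twfs) = Fwfsᶜ from hfix] at this
  refine subset_antisymm hsub ?_
  have hmodel : IsModel (reduct P Twfs) (LM (horn (del P Fwfs Twfs))) := by
    rintro q ⟨r, hr, hneg, rfl⟩ hb
    have hpos : r.pos ⊆ Fwfsᶜ := hb.trans hsub
    have hhead : r.head ∈ Fwfsᶜ := by
      have hm : IsModel (reduct P Twfs) (Fwfsᶜ) := by
        rw [← hfix]; exact lm_isModel _
      exact hm (r.head, r.pos) ⟨r, hr, hneg, rfl⟩ hpos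
    have hrdel : r ∈ del P Fwfs Twfs := by
      refine ⟨hr, hhead, ?_, hneg⟩
      rw [Set.eq_empty_iff_forall_notMem]
      exact fun a ⟨h1, h2⟩ => hpos h1 h2
    exact lm_isModel _ (r.head, r.pos) ⟨r, hrdel, rfl⟩ hb
  have := lm_le_of_model hmodel
  rwa [show LM (reduct P Twfs) = Fwfsᶜ from hfix] at this

/-- If F_wfs is the least fixpoint of A(F) = (GL(GL(Fᶜ)))ᶜ, then B(F) ⊆ F_wfs for every
    F ⊆ F_wfs; consequently F_wfs is the least fixpoint of B, i.e. lfp(B) = F_wfs. -/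
theorem stmt_17 {α : Type*} [Finite α] (P : Set (NRule α)) (Fwfs : Set α)
    (hfix : (GLop P (GLop P Fwfsᶜ))ᶜ = Fwfs)
    (hleast : ∀ X : Set α, (GLop P (GLop P Xᶜ))ᶜ = X → Fwfs ⊆ X) :
    (∀ F : Set α, F ⊆ Fwfs → Bop P F ⊆ Fwfs) ∧
      Bop P Fwfs = Fwfs ∧ ∀ X : Set α, Bop P X = X → Fwfs ⊆ X := by
  have hfix' : GLop P (GLop P Fwfsᶜ) = Fwfsᶜ := by
    have := congrArg compl hfix
    rwa [compl_compl] at this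
  have hcore := core P Fwfs hfix'
  have hBfix : Bop P Fwfs = Fwfs := by
    rw [Bop, hcore, compl_compl]
  refine ⟨?_, hBfix, ?_⟩
  · intro F hF
    have hT : GLop P Fᶜ ⊆ GLop P Fwfsᶜ := gl_anti P (Set.compl_subset_compl.mpr hF)
    have hdel : del P Fwfs (GLop P Fwfsᶜ) ⊆ del P F (GLop P Fᶜ) := by
      rintro r ⟨hr, hhead, hpos, hneg⟩
      refine ⟨hr, fun h => hhead (hF h), ?_, ?_⟩
      · rw [Set.eq_empty_iff_forall_notMem] at hpos ⊢
        exact fun a ⟨h1, h2⟩ => hpos a ⟨h1, hF h2⟩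
      · rw [Set.eq_empty_iff_forall_notMem] at hneg ⊢
        exact fun a ⟨h1, h2⟩ => hneg a ⟨h1, hT h2⟩
    have : LM (horn (del P Fwfs (GLop P Fwfsᶜ))) ⊆ LM (horn (del P F (GLop P Fᶜ))) := by
      apply lm_mono
      rintro q ⟨r, hr, rfl⟩
      exact ⟨r, hdel hr, rfl⟩
    rw [hcore] at this
    rw [Bop]
    exact Set.compl_subset_comm.mp this
  · intro X hBX
    -- A(X) ⊆ B(X) = X, so X is a pre-fixpoint of A; take least fixpoint below X
    have hmonoA : Monotone (fun F : Set α => (GLop P (GLop P Fᶜ))ᶜ) := by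
      intro F F' h
      exact Set.compl_subset_compl.mpr
        (gl_anti P (gl_anti P (Set.compl_subset_compl.mpr h)))
    have hAX : (GLop P (GLop P Xᶜ))ᶜ ⊆ X := by
      have step : (GLop P (GLop P Xᶜ))ᶜ ⊆ Bop P X :=
        Set.compl_subset_compl.mpr (lm_mono (horn_del_subset_reduct P X _))
      exact step.trans (le_of_eq hBX)
    set A : Set α →o Set α := ⟨fun F => (GLop P (GLop P Fᶜ))ᶜ, hmonoA⟩ with hA
    have hY : A (OrderHom.lfp A) = OrderHom.lfp A := OrderHom.map_lfp A
    have h1 : Fwfs ⊆ OrderHom.lfp A := hleast _ hY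
    have h2 : OrderHom.lfp A ≤ X := OrderHom.lfp_le A hAX
    exact h1.trans h2
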